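/- Let f : P → Q be a (λ, c)-quasi-isometry between graphs with path metrics. Then F : H_P → H_Q, F(x, m) = (f(x), m), is a quasi-isometry between the combinatorial horoballs, with constants depending only on λ and c. -/

import Mathlib

open SimpleGraph

/-- The Groves–Manning combinatorial horoball over a graph `G`: vertex set `V × ℕ`,
horizontal edges between `(x, m)` and `(y, m)` whenever `dist x y ≤ 2 ^ m`, and
vertical edges between `(x, m)` and `(x, m + 1)`. -/
def Horoball {V : Type*} (G : SimpleGraph V) : SimpleGraph (V × ℕ) where
  Adj p q :=
    (p.2 = q.2 ∧ p.1 ≠ q.1 ∧ G.dist p.1 q.1 ≤ 2 ^ p.2) ∨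
    (p.1 = q.1 ∧ (p.2 = q.2 + 1 ∨ q.2 = p.2 + 1))
  symm := by
    constructor
    rintro ⟨x, m⟩ ⟨y, n⟩ (⟨h1, h2, h3⟩ | ⟨h1, h2⟩)
    · exact Or.inl ⟨h1.symm, h2.symm, by simp only at h1 h3 ⊢; rw [SimpleGraph.dist_comm, ← h1]; exact h3⟩
    · exact Or.inr ⟨h1.symm, h2.symm⟩
  loopless := by
    constructor
    rintro ⟨x, m⟩ (⟨_, h, _⟩ | ⟨_, h | h⟩)
    · exact h rfl
    · omega
    · omega

/-!
Up to a multiplicative factor 4 and an additive 1, the distance from `(x, m)` to `(y, n)` in the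
horoball is `2 t - m - n`, where `t = max m n (⌈log₂ d(x, y)⌉)` is the level at which a geodesic
crosses over: climb to level `t`, take one horizontal edge, descend. Conversely a walk of length
`L` never rises above `min m n + L`, where each step moves at most `2 ^ (min m n + L)`
horizontally, so `d(x, y) ≤ 2 ^ (min m n + 2 L)`.
A `(λ, c)`-quasi-isometry moves `⌈log₂ d⌉`, hence `t`, by at most `A` whenever
`λ (1 + c) ≤ 2 ^ A`, so horoball distances change by at most a factor 4 and an additive `2 A + 1`.
-/

theorem Nat.clog_le_clog_add_of_le_mul_add {a b A : ℕ} {K C : ℝ} (hK : 0 ≤ K) (hC : 0 ≤ C)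
    (hKC : K + C ≤ 2 ^ A) (h : (b : ℝ) ≤ K * a + C) :
    Nat.clog 2 b ≤ Nat.clog 2 a + A := by
  rw [Nat.clog_le_iff_le_pow one_lt_two]
  set k := Nat.clog 2 a
  have ha : (a : ℝ) ≤ 2 ^ k := by exact_mod_cast Nat.le_pow_clog one_lt_two a
  have hk : (1 : ℝ) ≤ 2 ^ k := one_le_pow₀ one_le_two
  have : (b : ℝ) ≤ 2 ^ (k + A) :=
    calc (b : ℝ) ≤ K * 2 ^ k + C * 2 ^ k := by nlinarith
      _ = (K + C) * 2 ^ k := by ring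
      _ ≤ 2 ^ A * 2 ^ k := by gcongr
      _ = 2 ^ (k + A) := by rw [pow_add, mul_comm]
  exact_mod_cast this

namespace Horoball

variable {V : Type*} {G : SimpleGraph V}

theorem exists_walk_vertical (x : V) {m n : ℕ} (h : m ≤ n) :
    ∃ w : (Horoball G).Walk (x, m) (x, n), w.length = n - m := by
  induction n, h using Nat.le_induction with
  | base => exact ⟨.nil, by simp⟩
  | succ n hmn ih =>
    obtain ⟨w, hw⟩ := ih
    have hadj : (Horoball G).Adj (x, n) (x, n + 1) := Or.inr ⟨rfl, Or.inr rfl⟩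
    exact ⟨w.concat hadj, by rw [Walk.length_concat, hw]; omega⟩

theorem exists_walk_of_dist_le_two_pow {x y : V} {m n t : ℕ} (hm : m ≤ t) (hn : n ≤ t)
    (hxy : G.dist x y ≤ 2 ^ t) :
    ∃ w : (Horoball G).Walk (x, m) (y, n), w.length ≤ (t - m) + (t - n) + 1 := by
  obtain ⟨up, hup⟩ := exists_walk_vertical (G := G) x hm
  obtain ⟨down, hdown⟩ := exists_walk_vertical (G := G) y hn
  by_cases hxy' : x = y
  · subst hxy'
    refine ⟨up.append down.reverse, ?_⟩
    rw [Walk.length_append, Walk.length_reverse, hup, hdown]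
    omega
  · have hadj : (Horoball G).Adj (x, t) (y, t) := Or.inl ⟨rfl, hxy', hxy⟩
    refine ⟨up.append (.cons hadj down.reverse), ?_⟩
    rw [Walk.length_append, Walk.length_cons, Walk.length_reverse, hup, hdown]
    omega

theorem dist_le_of_dist_le_two_pow {x y : V} {m n t : ℕ} (hm : m ≤ t) (hn : n ≤ t)
    (hxy : G.dist x y ≤ 2 ^ t) :
    (Horoball G).dist (x, m) (y, n) ≤ (t - m) + (t - n) + 1 :=
  let ⟨w, hw⟩ := exists_walk_of_dist_le_two_pow hm hn hxy
  (dist_le w).trans hw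

theorem reachable (x y : V) (m n : ℕ) : (Horoball G).Reachable (x, m) (y, n) :=
  let ⟨w, _⟩ := exists_walk_of_dist_le_two_pow (t := max (max m n) (Nat.clog 2 (G.dist x y)))
    (by omega) (by omega)
    ((Nat.le_pow_clog one_lt_two _).trans (Nat.pow_le_pow_right two_pos (le_max_right _ _)))
  w.reachable

theorem level_le_add_length {p q r : V × ℕ} (w : (Horoball G).Walk p q) (hr : r ∈ w.support) :
    r.2 ≤ p.2 + w.length := by
  induction w with
  | nil => simp_all
  | @cons a b c hadj w ih =>
    rw [Walk.support_cons, List.mem_cons] at hr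
    rcases hr with rfl | hr
    · simp
    · have hab : b.2 ≤ a.2 + 1 := by rcases hadj with ⟨h, -, -⟩ | ⟨-, h | h⟩ <;> omega
      have := ih hr
      rw [Walk.length_cons]
      omega

theorem dist_le_length_mul (hG : G.Connected) {p q : V × ℕ} {T : ℕ}
    (w : (Horoball G).Walk p q) (hT : ∀ r ∈ w.support, r.2 ≤ T) :
    G.dist p.1 q.1 ≤ w.length * 2 ^ T := by
  induction w with
  | nil => simp
  | @cons a b c hadj w ih =>
    have ha : a.2 ≤ T := hT a (Walk.start_mem_support _)
    have hbc := ih fun r hr => hT r (List.mem_cons_of_mem _ hr)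
    have hab : G.dist a.1 b.1 ≤ 2 ^ T := by
      rcases hadj with ⟨-, -, h⟩ | ⟨h, -⟩
      · exact h.trans (Nat.pow_le_pow_right two_pos ha)
      · simp [h]
    calc G.dist a.1 c.1 ≤ G.dist a.1 b.1 + G.dist b.1 c.1 := hG.dist_triangle
      _ ≤ 2 ^ T + w.length * 2 ^ T := by gcongr
      _ = (Walk.cons hadj w).length * 2 ^ T := by rw [Walk.length_cons]; ring

theorem clog_dist_le_of_walk (hG : G.Connected) {x y : V} {m n : ℕ}
    (w : (Horoball G).Walk (x, m) (y, n)) :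
    Nat.clog 2 (G.dist x y) ≤ min m n + 2 * w.length := by
  set L := w.length
  have hlevel : ∀ r ∈ w.support, r.2 ≤ min m n + L := fun r hr => by
    have h₁ := level_le_add_length w hr
    have h₂ := level_le_add_length w.reverse (by simpa using hr)
    rw [Walk.length_reverse] at h₂
    simp only at h₁ h₂ ⊢
    omega
  rw [Nat.clog_le_iff_le_pow one_lt_two]
  calc G.dist x y ≤ L * 2 ^ (min m n + L) := dist_le_length_mul hG w hlevel
    _ ≤ 2 ^ L * 2 ^ (min m n + L) := by gcongr; exact Nat.lt_two_pow_self.le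
    _ = 2 ^ (min m n + 2 * L) := by rw [← pow_add]; ring_nf

theorem two_mul_max_clog_le (hG : G.Connected) (x y : V) (m n : ℕ) :
    2 * max (max m n) (Nat.clog 2 (G.dist x y)) ≤
      4 * (Horoball G).dist (x, m) (y, n) + (m + n) := by
  obtain ⟨w, hw⟩ := (reachable (G := G) x y m n).exists_walk_length_eq_dist
  have hm := level_le_add_length w.reverse (w.reverse.end_mem_support)
  have hn := level_le_add_length w w.end_mem_support
  have hclog := clog_dist_le_of_walk hG w
  rw [Walk.length_reverse] at hm
  simp only at hm hn
  omega

theorem dist_le_four_mul_dist_add {W : Type*} {G' : SimpleGraph W} (hG : G.Connected)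
    {x y : V} {x' y' : W} {A : ℕ}
    (h : Nat.clog 2 (G'.dist x' y') ≤ Nat.clog 2 (G.dist x y) + A) (m n : ℕ) :
    (Horoball G').dist (x', m) (y', n) ≤ 4 * (Horoball G).dist (x, m) (y, n) + (2 * A + 1) := by
  set t := max (max m n) (Nat.clog 2 (G.dist x y))
  have hxy' : G'.dist x' y' ≤ 2 ^ (t + A) :=
    (Nat.clog_le_iff_le_pow one_lt_two).mp (h.trans (by omega))
  have hup := dist_le_of_dist_le_two_pow (G := G') (m := m) (n := n) (by omega) (by omega) hxy'
  have hlow := two_mul_max_clog_le hG x y m n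
  omega

end Horoball

/-- A `(λ, c)`-quasi-isometry between connected graphs (with their path metrics)
extends to a quasi-isometry `F(x, m) = (f x, m)` between their combinatorial
horoballs, with constants depending only on `λ` and `c`. -/
theorem horoball_extension_qi (lam c : ℝ) (hlam : 1 ≤ lam) (hc : 0 ≤ c) :
    ∃ lam' c' : ℝ, 1 ≤ lam' ∧ 0 ≤ c' ∧
      ∀ (V W : Type) (G : SimpleGraph V) (G' : SimpleGraph W),
        G.Connected → G'.Connected →
        ∀ f : V → W,
          (∀ x y : V,
            (1 / lam) * (G.dist x y : ℝ) - c ≤ (G'.dist (f x) (f y) : ℝ) ∧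
            (G'.dist (f x) (f y) : ℝ) ≤ lam * (G.dist x y : ℝ) + c) →
          (∀ w : W, ∃ v : V, (G'.dist w (f v) : ℝ) ≤ c) →
          (∀ p q : V × ℕ,
            (1 / lam') * ((Horoball G).dist p q : ℝ) - c' ≤
              ((Horoball G').dist (f p.1, p.2) (f q.1, q.2) : ℝ) ∧
            ((Horoball G').dist (f p.1, p.2) (f q.1, q.2) : ℝ) ≤
              lam' * ((Horoball G).dist p q : ℝ) + c') ∧
          (∀ q : W × ℕ, ∃ p : V × ℕ,
            ((Horoball G').dist q (f p.1, p.2) : ℝ) ≤ c') := by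
  obtain ⟨A, hA⟩ := exists_nat_ge (lam * (1 + c))
  have hA2 : lam * (1 + c) ≤ 2 ^ A := hA.trans (by exact_mod_cast Nat.lt_two_pow_self.le)
  refine ⟨4, 2 * A + 1, by norm_num, by positivity, ?_⟩
  intro V W G G' hG hG' f hf hdense
  refine ⟨fun ⟨x, m⟩ ⟨y, n⟩ => ⟨?_, ?_⟩, fun ⟨w, n⟩ => ?_⟩
  · have hxy : (G.dist x y : ℝ) ≤ lam * G'.dist (f x) (f y) + lam * c := by
      have := (hf x y).1
      rw [div_mul_eq_mul_div, one_mul, sub_le_iff_le_add, div_le_iff₀ (by positivity)] at this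
      linarith
    have := Horoball.dist_le_four_mul_dist_add hG'
      (Nat.clog_le_clog_add_of_le_mul_add (by positivity) (by positivity) (by nlinarith) hxy) m n
    have : ((Horoball G).dist (x, m) (y, n) : ℝ) ≤
        4 * (Horoball G').dist (f x, m) (f y, n) + (2 * A + 1) := by exact_mod_cast this
    linarith
  · have := Horoball.dist_le_four_mul_dist_add hG
      (Nat.clog_le_clog_add_of_le_mul_add (by positivity) hc (by nlinarith) (hf x y).2) m n
    exact_mod_cast this
  · obtain ⟨v, hv⟩ := hdense w
    have hwv : G'.dist w (f v) ≤ 2 ^ (n + A) := by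
      have : (G'.dist w (f v) : ℝ) ≤ 2 ^ (n + A) := by
        calc (G'.dist w (f v) : ℝ) ≤ lam * (1 + c) := by nlinarith
          _ ≤ 2 ^ (n + A) := hA2.trans (pow_le_pow_right₀ one_le_two (by omega))
      exact_mod_cast this
    refine ⟨(v, n), ?_⟩
    have := Horoball.dist_le_of_dist_le_two_pow (le_add_right le_rfl) (le_add_right le_rfl) hwv
    rw [Nat.add_sub_cancel_left] at this
    exact_mod_cast this.trans (by omega)
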